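/- Let P be a disjunctive ASP program and M an answer set of P. Then every unfounded set X for P with respect to M itself satisfies M ∩ X = ∅. -/

import Mathlib

/-- A ground disjunctive rule: `head` is the (nonempty) set of head atoms,
`pos` the set of positive body atoms, and `neg` the set of atoms occurring
negated in the body. -/
structure GRule (Atom : Type) where
  head : Set Atom
  pos : Set Atom
  neg : Set Atom
  head_nonempty : head.Nonempty

/-- The fact `a.` (a rule with singleton head and empty body). -/
def GRule.fact {Atom : Type} (a : Atom) : GRule Atom :=
  ⟨{a}, ∅, ∅, Set.singleton_nonempty a⟩

/-- An interpretation `I` satisfies a ground rule `r`: some head atom is true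
in `I` whenever all positive body atoms are in `I` and no negated body atom is in `I`. -/
def satisfiesRule {Atom : Type} (I : Set Atom) (r : GRule Atom) : Prop :=
  r.pos ⊆ I → r.neg ∩ I = ∅ → (r.head ∩ I).Nonempty

/-- `I` is a model of the ground program `P`. -/
def isModel {Atom : Type} (I : Set Atom) (P : Set (GRule Atom)) : Prop :=
  ∀ r ∈ P, satisfiesRule I r

/-- The Gelfond–Lifschitz reduct `ground(P)^I`: delete rules whose negated body
atoms intersect `I`, and remove the negative literals from the remaining rules. -/
def reduct {Atom : Type} (P : Set (GRule Atom)) (I : Set Atom) : Set (GRule Atom) :=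
  { r' | ∃ r ∈ P, r.neg ∩ I = ∅ ∧ r' = ⟨r.head, r.pos, ∅, r.head_nonempty⟩ }

/-- `M` is an answer set of `P` iff `M` is a subset-minimal model of `ground(P)^M`. -/
def isAnswerSet {Atom : Type} (P : Set (GRule Atom)) (M : Set Atom) : Prop :=
  isModel M (reduct P M) ∧ ∀ N : Set Atom, N ⊆ M → isModel N (reduct P M) → N = M

/-- `X` is an unfounded set for `P` w.r.t. the interpretation `I`: for each rule
of `ground(P)` whose head meets `X`, either (1.a) the positive body is not
contained in `I`, or (1.b) some negated body atom is in `I`, or (2) the positive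
body meets `X`, or (3) some head atom is in `I \ X`. -/
def unfoundedSet {Atom : Type} (P : Set (GRule Atom)) (I X : Set Atom) : Prop :=
  ∀ r ∈ P, (X ∩ r.head).Nonempty →
    (¬ r.pos ⊆ I) ∨ (r.neg ∩ I).Nonempty ∨ (r.pos ∩ X).Nonempty ∨
      (r.head ∩ (I \ X)).Nonempty

/- Removing an unfounded set `X` from a model of the reduct keeps it a model: a reduct rule that
fires in `I \ X` has its head met by `I`; if every such head atom lay in `X`, unfoundedness would
give a positive body atom in `X` or a head atom in `I \ X`, both impossible. So an answer set,
being a minimal model of its reduct, cannot meet `X`. -/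

theorem isModel_reduct_iff {Atom : Type} (P : Set (GRule Atom)) (I N : Set Atom) :
    isModel N (reduct P I) ↔
      ∀ r ∈ P, r.neg ∩ I = ∅ → r.pos ⊆ N → (r.head ∩ N).Nonempty := by
  constructor
  · intro hN r hr hneg hpos
    exact hN ⟨r.head, r.pos, ∅, r.head_nonempty⟩ ⟨r, hr, hneg, rfl⟩ hpos (Set.empty_inter N)
  · rintro hN _ ⟨r, hr, hneg, rfl⟩ hpos -
    exact hN r hr hneg hpos

theorem isModel_reduct_diff_of_unfoundedSet {Atom : Type} {P : Set (GRule Atom)} {I X : Set Atom}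
    (hI : isModel I (reduct P I)) (hX : unfoundedSet P I X) :
    isModel (I \ X) (reduct P I) := by
  rw [isModel_reduct_iff] at hI ⊢
  intro r hr hneg hpos
  have hposI : r.pos ⊆ I := hpos.trans Set.sdiff_subset
  by_contra hhead
  have hheadX : r.head ∩ I ⊆ X := fun a ⟨haH, haI⟩ => by
    by_contra haX
    exact hhead ⟨a, haH, haI, haX⟩
  obtain ⟨a, haH, haI⟩ := hI r hr hneg hposI
  rcases hX r hr ⟨a, hheadX ⟨haH, haI⟩, haH⟩ with hnot | hnegI | ⟨b, hbP, hbX⟩ | hheadIX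
  · exact hnot hposI
  · exact hnegI.ne_empty hneg
  · exact (hpos hbP).2 hbX
  · exact hhead hheadIX

/-- Every unfounded set `X` for `P` w.r.t. an answer set `M`
of `P` itself satisfies `M ∩ X = ∅`. -/
theorem answer_set_disjoint_from_unfounded {Atom : Type}
    (P : Set (GRule Atom)) (M : Set Atom) (hM : isAnswerSet P M)
    (X : Set Atom) (hX : unfoundedSet P M X) :
    M ∩ X = ∅ := by
  obtain ⟨hmodel, hminimal⟩ := hM
  have hdiff : M \ X = M :=
    hminimal _ Set.sdiff_subset (isModel_reduct_diff_of_unfoundedSet hmodel hX)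
  exact Set.disjoint_iff_inter_eq_empty.mp (sdiff_eq_left.mp hdiff)
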